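/- Let d ≥ 1 and for each i ∈ {1,…,d} let x_{i,1},…,x_{i,N_i} ∈ (0,1) be pairwise distinct real numbers. Suppose ε > 0 satisfies ε ≤ x_{i,j} for all i,j and ε ≤ |x_{i,j} − x_{i,k}| for all i and all j ≠ k, and let δ be a real number with 0 < δ < min{1/2, 1/(1+ε)}. Let a_1,…,a_d be real numbers with (1/2)·(2/(εδ))^i < a_i < (2/(εδ))^i for each i. Then for any two functions π, ψ ∈ ∏_{i=1}^d {1,…,N_i} with π ≠ ψ, the sums F_π = Σ_{i=1}^d a_i x_{i,π(i)} and F_ψ = Σ_{i=1}^d a_i x_{i,ψ(i)} satisfy |F_π − F_ψ| > 1/δ. In particular the sums F_π are pairwise distinct. -/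

import Mathlib

/-!
Let `m` be the largest index with `π m ≠ ψ m`, and `r = 2/(εδ)`. The `m`-th term of
`F_π - F_ψ` has absolute value at least `a_m ε > r^m / δ`, while the lower terms add up to at
most `∑_{i<m} a_i < ∑_{j<m} r^(j+1) ≤ (r^m - 1)/δ`, the last step because `δ r ≤ r - 1`.
The two bounds differ by exactly `1/δ`.
-/

open Finset

theorem abs_sub_sum_abs_lt_le_abs_sum {ι : Type*} [LinearOrder ι] (s : Finset ι) (f : ι → ℝ)
    {m : ι} (hm : m ∈ s) (hf : ∀ i ∈ s, m < i → f i = 0) :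
    |f m| - ∑ i ∈ s with i < m, |f i| ≤ |∑ i ∈ s, f i| := by
  have hrest : ∑ i ∈ s with ¬i < m, f i = f m := by
    refine sum_eq_single_of_mem m (by simp [hm]) fun i hi him => hf i (mem_filter.1 hi).1 ?_
    exact lt_of_le_of_ne (not_lt.1 (mem_filter.1 hi).2) (Ne.symm him)
  have hsplit := sum_filter_add_sum_filter_not s (· < m) f
  rw [hrest] at hsplit
  calc |f m| - ∑ i ∈ s with i < m, |f i|
      ≤ |f m| - |∑ i ∈ s with i < m, f i| := by gcongr; exact abs_sum_le_sum_abs f _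
    _ ≤ |∑ i ∈ s, f i| := by
      rw [← hsplit, sub_le_iff_le_add]
      simpa using abs_sub (∑ i ∈ s with i < m, f i + f m) (∑ i ∈ s with i < m, f i)

theorem mul_sum_range_pow_succ_le_pow_sub_one {r δ : ℝ} (hr : 0 ≤ r) (h : δ * r ≤ r - 1) (m : ℕ) :
    δ * ∑ j ∈ range m, r ^ (j + 1) ≤ r ^ m - 1 := by
  have hgeom := geom_sum_mul r m
  have hsum : ∑ j ∈ range m, r ^ (j + 1) = r * ∑ j ∈ range m, r ^ j := by
    rw [mul_sum]; exact sum_congr rfl fun j _ => pow_succ' r j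
  rw [hsum, ← hgeom, ← mul_assoc, mul_comm _ (r - 1)]
  exact mul_le_mul_of_nonneg_right h (sum_nonneg fun j _ => pow_nonneg hr j)

theorem Fin.sum_Iio_val {M : Type*} [AddCommMonoid M] {d : ℕ} (m : Fin d) (g : ℕ → M) :
    ∑ i ∈ Iio m, g i = ∑ j ∈ range m, g j := by
  rw [← Nat.Iio_eq_range, ← Fin.map_valEmbedding_Iio, sum_map]; rfl

theorem exists_ne_forall_lt_eq {ι : Type*} [Fintype ι] [LinearOrder ι] {β : ι → Type*}
    {f g : ∀ i, β i} (h : f ≠ g) : ∃ m, f m ≠ g m ∧ ∀ i, m < i → f i = g i := by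
  classical
  obtain ⟨i₀, hi₀⟩ := Function.ne_iff.1 h
  obtain ⟨m, hm, hmax⟩ := exists_max_image {i | f i ≠ g i} id ⟨i₀, by simpa using hi₀⟩
  refine ⟨m, by simpa using hm, fun i hmi => ?_⟩
  by_contra hi
  exact (hmax i (by simpa using hi)).not_gt hmi

theorem mul_two_div_le_two_div_sub_one {ε δ : ℝ} (hε : 0 < ε) (hδ0 : 0 < δ)
    (hδ : δ < 1 / (1 + ε)) : δ * (2 / (ε * δ)) ≤ 2 / (ε * δ) - 1 := by
  rw [lt_div_iff₀ (by positivity)] at hδ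
  rw [le_sub_iff_add_le, le_div_iff₀ (by positivity)]
  field_simp
  nlinarith

theorem abs_mul_sub_le_of_mem_Ioo {a x y : ℝ} (ha : 0 ≤ a) (hx : x ∈ Set.Ioo (0 : ℝ) 1)
    (hy : y ∈ Set.Ioo (0 : ℝ) 1) : |a * (x - y)| ≤ a := by
  rw [abs_mul, abs_of_nonneg ha]
  exact mul_le_of_le_one_right ha (abs_sub_le_of_nonneg_of_le hx.1.le hx.2.le hy.1.le hy.2.le)

theorem pow_two_div_lt_mul_abs_mul {ε δ a c : ℝ} (hε : 0 < ε) (hδ0 : 0 < δ) (n : ℕ)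
    (ha : (1 / 2) * (2 / (ε * δ)) ^ (n + 1) < a) (hc : ε ≤ |c|) :
    (2 / (ε * δ)) ^ n < δ * |a * c| := by
  have ha0 : 0 < a := lt_trans (by positivity) ha
  have hδrε : δ * (2 / (ε * δ)) * ε = 2 := by field_simp
  calc (2 / (ε * δ)) ^ n = δ * ((1 / 2) * (2 / (ε * δ)) ^ (n + 1) * ε) := by
        rw [pow_succ]; linear_combination (-(2 / (ε * δ)) ^ n / 2) * hδrε
    _ < δ * (a * ε) := by gcongr
    _ ≤ δ * |a * c| := by rw [abs_mul, abs_of_pos ha0]; gcongr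

theorem stmt_0 (d : ℕ) (N : Fin d → ℕ)
    (x : (i : Fin d) → Fin (N i) → ℝ)
    (hx01 : ∀ i j, x i j ∈ Set.Ioo (0 : ℝ) 1)
    (ε : ℝ) (hε : 0 < ε)
    (hεsep : ∀ i, ∀ j k : Fin (N i), j ≠ k → ε ≤ |x i j - x i k|)
    (δ : ℝ) (hδ0 : 0 < δ) (hδ : δ < min (1/2) (1/(1+ε)))
    (a : Fin d → ℝ)
    (ha : ∀ i : Fin d, (1/2) * (2/(ε*δ))^((i : ℕ)+1) < a i ∧ a i < (2/(ε*δ))^((i : ℕ)+1))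
    (π ψ : (i : Fin d) → Fin (N i)) (hπψ : π ≠ ψ) :
    |(∑ i, a i * x i (π i)) - (∑ i, a i * x i (ψ i))| > 1/δ := by
  set r := 2 / (ε * δ)
  set f : Fin d → ℝ := fun i => a i * (x i (π i) - x i (ψ i)) with hf
  have hdiff : (∑ i, a i * x i (π i)) - (∑ i, a i * x i (ψ i)) = ∑ i, f i := by
    simp only [hf, mul_sub, sum_sub_distrib]
  obtain ⟨m, hm, hmax⟩ := exists_ne_forall_lt_eq hπψ
  have hlead : r ^ (m : ℕ) < δ * |f m| :=
    pow_two_div_lt_mul_abs_mul hε hδ0 m (ha m).1 (hεsep m _ _ hm)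
  have hlower (i : Fin d) : |f i| ≤ r ^ ((i : ℕ) + 1) :=
    (abs_mul_sub_le_of_mem_Ioo (lt_trans (by positivity) (ha i).1).le (hx01 i _) (hx01 i _)).trans
      (ha i).2.le
  have htail : δ * ∑ i ∈ Iio m, |f i| ≤ r ^ (m : ℕ) - 1 := calc
    δ * ∑ i ∈ Iio m, |f i| ≤ δ * ∑ j ∈ range m, r ^ (j + 1) := by
      rw [← Fin.sum_Iio_val m (fun j => r ^ (j + 1))]; gcongr with i; exact hlower i
    _ ≤ r ^ (m : ℕ) - 1 := mul_sum_range_pow_succ_le_pow_sub_one (by positivity)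
      (mul_two_div_le_two_div_sub_one hε hδ0 (hδ.trans_le (min_le_right _ _))) m
  have hsum := abs_sub_sum_abs_lt_le_abs_sum univ f (mem_univ m)
    fun i _ hi => by simp [hf, hmax i hi]
  rw [filter_gt_eq_Iio] at hsum
  rw [hdiff, gt_iff_lt, div_lt_iff₀' hδ0]
  linarith [mul_le_mul_of_nonneg_left hsum hδ0.le, mul_sub δ |f m| (∑ i ∈ Iio m, |f i|)]
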